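/- arXiv:1707.08549 — 5 statements merged into one kernel-verified Lean document; each statement's English description precedes it below -/
import Mathlib

section
/- Let d ≥ 2. If x ∈ ℝ² satisfies x₁² + x₂² = 1 and each coordinate xᵢ is a dyadic rational (i.e., of the form z/2^k with z ∈ ℤ and k ∈ ℕ), then each xᵢ ∈ {-1, 0, 1}. Consequently there are exactly 4 points with dyadic-rational (in particular, floating-point representable) coordinates on the unit circle S¹. -/
/-- A real number is a dyadic rational if it has the form `z / 2 ^ k`
with `z : ℤ` and `k : ℕ`. -/
def IsDyadic (x : ℝ) : Prop := ∃ (z : ℤ) (k : ℕ), x = (z : ℝ) / 2 ^ k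

/-!
Put both coordinates over a common denominator `2 ^ k`: the numerators then satisfy
`a ^ 2 + b ^ 2 = 4 ^ k`. Squares are `0` or `1` mod `4`, so for `k > 0` both `a` and `b` are even
and we may halve them; descending to `k = 0` leaves `a ^ 2 + b ^ 2 = 1`, where `a * b = 0`.
Hence one coordinate vanishes and the other is `±1`.
-/

theorem Int.two_dvd_and_two_dvd_of_four_dvd_sq_add_sq {a b : ℤ} (h : 4 ∣ a ^ 2 + b ^ 2) :
    2 ∣ a ∧ 2 ∣ b := by
  have sq_emod_four (c : ℤ) : c ^ 2 % 4 = if 2 ∣ c then 0 else 1 := by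
    split_ifs with hc
    · obtain ⟨m, rfl⟩ := hc
      rw [mul_pow]
      omega
    · exact Int.sq_mod_four_eq_one_of_odd (Int.not_even_iff_odd.mp (by rwa [even_iff_two_dvd]))
  have := sq_emod_four a
  have := sq_emod_four b
  split_ifs at * <;> omega

theorem Int.mul_eq_zero_of_sq_add_sq_eq_four_pow {a b : ℤ} {k : ℕ}
    (h : a ^ 2 + b ^ 2 = 4 ^ k) : a * b = 0 := by
  induction k generalizing a b with
  | zero => nlinarith [sq_nonneg (a * b), sq_nonneg (a - b), sq_nonneg (a + b)]
  | succ k ih =>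
    obtain ⟨⟨m, rfl⟩, ⟨n, rfl⟩⟩ := Int.two_dvd_and_two_dvd_of_four_dvd_sq_add_sq
      (h ▸ dvd_pow_self 4 k.succ_ne_zero)
    have hmn : m ^ 2 + n ^ 2 = 4 ^ k := by linarith [pow_succ (4 : ℤ) k]
    rw [mul_mul_mul_comm, ih hmn, mul_zero]

theorem IsDyadic.exists_common_denom {x y : ℝ} (hx : IsDyadic x) (hy : IsDyadic y) :
    ∃ (a b : ℤ) (k : ℕ), x = a / 2 ^ k ∧ y = b / 2 ^ k := by
  obtain ⟨z, k, rfl⟩ := hx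
  obtain ⟨w, l, rfl⟩ := hy
  refine ⟨z * 2 ^ l, w * 2 ^ k, k + l, ?_, ?_⟩ <;>
  · push_cast
    field_simp
    ring

theorem mul_eq_zero_of_isDyadic_of_sq_add_sq_eq_one {x y : ℝ} (hx : IsDyadic x)
    (hy : IsDyadic y) (h : x ^ 2 + y ^ 2 = 1) : x * y = 0 := by
  obtain ⟨a, b, k, rfl, rfl⟩ := hx.exists_common_denom hy
  have hab : a ^ 2 + b ^ 2 = 4 ^ k := by
    have : (a : ℝ) ^ 2 + b ^ 2 = 4 ^ k := by
      field_simp at h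
      rw [h, ← pow_mul, mul_comm, pow_mul]
      norm_num
    exact_mod_cast this
  rcases mul_eq_zero.mp (Int.mul_eq_zero_of_sq_add_sq_eq_four_pow hab) with rfl | rfl <;> simp

theorem mem_of_isDyadic_of_sq_add_sq_eq_one {x y : ℝ} (hx : IsDyadic x) (hy : IsDyadic y)
    (h : x ^ 2 + y ^ 2 = 1) : x ∈ ({-1, 0, 1} : Set ℝ) := by
  rcases mul_eq_zero.mp (mul_eq_zero_of_isDyadic_of_sq_add_sq_eq_one hx hy h) with hx0 | hy0
  · simp [hx0]
  · have hx1 : x ^ 2 = 1 := by simpa [hy0] using h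
    rcases sq_eq_one_iff.mp hx1 with rfl | rfl <;> simp

theorem isDyadic_zero : IsDyadic 0 := ⟨0, 0, by simp⟩

theorem isDyadic_one : IsDyadic 1 := ⟨1, 0, by simp⟩

theorem isDyadic_neg_one : IsDyadic (-1) := ⟨-1, 0, by simp⟩

theorem setOf_isDyadic_unit_circle :
    {p : ℝ × ℝ | IsDyadic p.1 ∧ IsDyadic p.2 ∧ p.1 ^ 2 + p.2 ^ 2 = 1} =
      {(1, 0), (-1, 0), (0, 1), (0, -1)} := by
  ext ⟨x, y⟩
  simp only [Set.mem_ofPred_eq, Set.mem_insert_iff, Set.mem_singleton_iff, Prod.mk.injEq]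
  constructor
  · rintro ⟨hx, hy, h⟩
    have hx' := mem_of_isDyadic_of_sq_add_sq_eq_one hx hy h
    have hy' := mem_of_isDyadic_of_sq_add_sq_eq_one hy hx (by linarith)
    simp only [Set.mem_insert_iff, Set.mem_singleton_iff] at hx' hy'
    rcases hx' with rfl | rfl | rfl <;> rcases hy' with rfl | rfl | rfl <;> norm_num at h <;> norm_num
  · rintro (⟨rfl, rfl⟩ | ⟨rfl, rfl⟩ | ⟨rfl, rfl⟩ | ⟨rfl, rfl⟩) <;>
      norm_num [isDyadic_zero, isDyadic_one, isDyadic_neg_one]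

/-- The only points on the unit circle `S¹` with dyadic-rational coordinates have
coordinates in `{-1, 0, 1}`; consequently there are exactly 4 such points. -/
theorem dyadic_points_on_unit_circle :
    (∀ x₁ x₂ : ℝ, IsDyadic x₁ → IsDyadic x₂ → x₁ ^ 2 + x₂ ^ 2 = 1 →
      x₁ ∈ ({-1, 0, 1} : Set ℝ) ∧ x₂ ∈ ({-1, 0, 1} : Set ℝ)) ∧
    {p : ℝ × ℝ | IsDyadic p.1 ∧ IsDyadic p.2 ∧ p.1 ^ 2 + p.2 ^ 2 = 1}.ncard = 4 := by
  refine ⟨fun x₁ x₂ h₁ h₂ h => ⟨mem_of_isDyadic_of_sq_add_sq_eq_one h₁ h₂ h,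
    mem_of_isDyadic_of_sq_add_sq_eq_one h₂ h₁ (by linarith)⟩, ?_⟩
  rw [setOf_isDyadic_unit_circle]
  repeat rw [Set.ncard_insert_of_notMem (by norm_num)]
  rw [Set.ncard_singleton]
end

section
/- If x ∈ ℝ³ satisfies x₁² + x₂² + x₃² = 1 and each coordinate xᵢ is a dyadic rational (i.e., of the form z/2^k with z ∈ ℤ and k ∈ ℕ), then each xᵢ ∈ {-1, 0, 1}. Consequently there are exactly 6 points with dyadic-rational (in particular, floating-point representable) coordinates on the unit sphere S². -/
namespace Int

theorem even_of_four_dvd_sq_add_sq_add_sq {a b c : ℤ} (h : 4 ∣ a ^ 2 + b ^ 2 + c ^ 2) :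
    Even a ∧ Even b ∧ Even c := by
  have mod_four : ∀ a b c : ZMod 4, a ^ 2 + b ^ 2 + c ^ 2 = 0 →
      2 * a = 0 ∧ 2 * b = 0 ∧ 2 * c = 0 := by decide
  have even_iff (n : ℤ) : Even n ↔ ((2 * n : ℤ) : ZMod 4) = 0 := by
    rw [ZMod.intCast_zmod_eq_zero_iff_dvd, even_iff_two_dvd]
    exact (mul_dvd_mul_iff_left two_ne_zero).symm
  have h' := (ZMod.intCast_zmod_eq_zero_iff_dvd _ 4).mpr (by exact_mod_cast h)
  push_cast at h'
  simpa only [even_iff, Int.cast_mul, Int.cast_ofNat] using mod_four _ _ _ h'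

theorem two_pow_dvd_of_sq_add_sq_add_sq_eq_four_pow {k : ℕ} {x y z : ℤ}
    (h : x ^ 2 + y ^ 2 + z ^ 2 = 4 ^ k) : 2 ^ k ∣ x ∧ 2 ^ k ∣ y ∧ 2 ^ k ∣ z := by
  induction k generalizing x y z with
  | zero => simp
  | succ k ih =>
    have h4 : 4 ∣ x ^ 2 + y ^ 2 + z ^ 2 := h ▸ dvd_pow_self 4 k.succ_ne_zero
    obtain ⟨⟨a, rfl⟩, ⟨b, rfl⟩, ⟨c, rfl⟩⟩ := even_of_four_dvd_sq_add_sq_add_sq h4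
    have hsum : a ^ 2 + b ^ 2 + c ^ 2 = 4 ^ k :=
      mul_left_cancel₀ four_ne_zero (by linear_combination h)
    obtain ⟨ha, hb, hc⟩ := ih hsum
    simp only [← two_mul, pow_succ']
    exact ⟨mul_dvd_mul_left 2 ha, mul_dvd_mul_left 2 hb, mul_dvd_mul_left 2 hc⟩

end Int

theorem IsDyadic.intCast (n : ℤ) : IsDyadic n := ⟨n, 0, by simp⟩

open Filter in
theorem IsDyadic.eventually_exists_eq_div_two_pow {x : ℝ} (hx : IsDyadic x) :
    ∀ᶠ k in atTop, ∃ z : ℤ, x = z / 2 ^ k := by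
  obtain ⟨z, j, rfl⟩ := hx
  filter_upwards [eventually_ge_atTop j] with k hk
  obtain ⟨m, rfl⟩ := Nat.exists_eq_add_of_le hk
  refine ⟨z * 2 ^ m, ?_⟩
  push_cast
  rw [pow_add]
  field_simp

theorem IsDyadic.exists_eq_intCast_of_sq_add_sq_add_sq_eq_one {x y z : ℝ}
    (hx : IsDyadic x) (hy : IsDyadic y) (hz : IsDyadic z) (h : x ^ 2 + y ^ 2 + z ^ 2 = 1) :
    ∃ a : ℤ, x = a := by
  obtain ⟨k, ⟨X, rfl⟩, ⟨Y, rfl⟩, ⟨Z, rfl⟩⟩ :=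
    (hx.eventually_exists_eq_div_two_pow.and (hy.eventually_exists_eq_div_two_pow.and
      hz.eventually_exists_eq_div_two_pow)).exists
  have hsum : X ^ 2 + Y ^ 2 + Z ^ 2 = 4 ^ k := by
    have : (X : ℝ) ^ 2 + Y ^ 2 + Z ^ 2 = 4 ^ k := by
      rw [show (4 : ℝ) = 2 ^ 2 by norm_num, pow_right_comm]
      field_simp at h
      linarith
    exact_mod_cast this
  obtain ⟨a, rfl⟩ := (Int.two_pow_dvd_of_sq_add_sq_add_sq_eq_four_pow hsum).1
  exact ⟨a, by push_cast; field_simp⟩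

theorem IsDyadic.mem_of_sq_add_sq_add_sq_eq_one {x y z : ℝ} (hx : IsDyadic x)
    (hy : IsDyadic y) (hz : IsDyadic z) (h : x ^ 2 + y ^ 2 + z ^ 2 = 1) :
    x ∈ ({-1, 0, 1} : Set ℝ) ∧ y ∈ ({-1, 0, 1} : Set ℝ) ∧
      z ∈ ({-1, 0, 1} : Set ℝ) := by
  have first_mem {x y z : ℝ} (hx : IsDyadic x) (hy : IsDyadic y) (hz : IsDyadic z)
      (h : x ^ 2 + y ^ 2 + z ^ 2 = 1) : x ∈ ({-1, 0, 1} : Set ℝ) := by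
    obtain ⟨a, rfl⟩ := hx.exists_eq_intCast_of_sq_add_sq_add_sq_eq_one hy hz h
    have : |(a : ℝ)| ≤ 1 :=
      (sq_le_one_iff_abs_le_one _).mp (by nlinarith [sq_nonneg y, sq_nonneg z])
    rcases Int.abs_le_one_iff.mp (by exact_mod_cast this) with rfl | rfl | rfl <;> simp
  exact ⟨first_mem hx hy hz h, first_mem hy hx hz (by linarith),
    first_mem hz hx hy (by linarith)⟩

theorem setOf_isDyadic_sphere_eq :
    {p : ℝ × ℝ × ℝ | IsDyadic p.1 ∧ IsDyadic p.2.1 ∧ IsDyadic p.2.2 ∧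
      p.1 ^ 2 + p.2.1 ^ 2 + p.2.2 ^ 2 = 1} =
      {(1, 0, 0), (-1, 0, 0), (0, 1, 0), (0, -1, 0), (0, 0, 1), (0, 0, -1)} := by
  ext ⟨x, y, z⟩
  simp only [Set.mem_ofPred_eq, Set.mem_insert_iff, Set.mem_singleton_iff, Prod.mk.injEq]
  constructor
  · rintro ⟨hx, hy, hz, h⟩
    obtain ⟨hx', hy', hz'⟩ := IsDyadic.mem_of_sq_add_sq_add_sq_eq_one hx hy hz h
    simp only [Set.mem_insert_iff, Set.mem_singleton_iff] at hx' hy' hz'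
    rcases hx' with rfl | rfl | rfl <;> rcases hy' with rfl | rfl | rfl <;>
      rcases hz' with rfl | rfl | rfl <;> revert h <;> norm_num
  · have h₀ := IsDyadic.intCast 0
    have h₁ := IsDyadic.intCast 1
    have h₂ := IsDyadic.intCast (-1)
    push_cast at h₀ h₁ h₂
    rintro (⟨rfl, rfl, rfl⟩ | ⟨rfl, rfl, rfl⟩ | ⟨rfl, rfl, rfl⟩ | ⟨rfl, rfl, rfl⟩ |
      ⟨rfl, rfl, rfl⟩ | ⟨rfl, rfl, rfl⟩) <;> norm_num [*]

/-- The only points on the unit sphere `S²` with dyadic-rational coordinates have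
coordinates in `{-1, 0, 1}`; consequently there are exactly 6 such points. -/
theorem dyadic_points_on_unit_sphere :
    (∀ x₁ x₂ x₃ : ℝ, IsDyadic x₁ → IsDyadic x₂ → IsDyadic x₃ →
      x₁ ^ 2 + x₂ ^ 2 + x₃ ^ 2 = 1 →
      x₁ ∈ ({-1, 0, 1} : Set ℝ) ∧ x₂ ∈ ({-1, 0, 1} : Set ℝ) ∧
        x₃ ∈ ({-1, 0, 1} : Set ℝ)) ∧
    {p : ℝ × ℝ × ℝ | IsDyadic p.1 ∧ IsDyadic p.2.1 ∧ IsDyadic p.2.2 ∧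
      p.1 ^ 2 + p.2.1 ^ 2 + p.2.2 ^ 2 = 1}.ncard = 6 := by
  refine ⟨fun _ _ _ => IsDyadic.mem_of_sq_add_sq_add_sq_eq_one, ?_⟩
  rw [setOf_isDyadic_sphere_eq]
  norm_num [Set.ncard_insert_of_notMem, Prod.ext_iff]
end

section
/- Let j ∈ ℕ. If y ∈ ℝ³ has all coordinates dyadic rationals (i.e., of the form z/2^k with z ∈ ℤ, k ∈ ℕ) and satisfies y₁² + y₂² + y₃² = (2^j)², then each coordinate yᵢ ∈ {-2^j, 0, 2^j}. -/
lemma even_of_sum_sq (a b c : ℤ) (m : ℕ) (h : a^2+b^2+c^2 = 4^(m+1)) : 2 ∣ a := by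
  have h4 : ((a : ZMod 4))^2 + (b:ZMod 4)^2 + (c:ZMod 4)^2 = 0 := by
    have := congrArg (fun n : ℤ => (n : ZMod 4)) h
    push_cast at this
    rw [this]
    rw [show ((4:ZMod 4)) = 0 by decide, zero_pow (Nat.succ_ne_zero m)]
  have key : ∀ x y z : ZMod 4, x^2+y^2+z^2 = 0 → x = 0 ∨ x = 2 := by decide
  rcases key _ _ _ h4 with h0 | h2
  · have : (4:ℤ) ∣ a := by
      rwa [ZMod.intCast_zmod_eq_zero_iff_dvd] at h0
    omega
  · have : (4:ℤ) ∣ a - 2 := by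
      have : ((a - 2 : ℤ) : ZMod 4) = 0 := by push_cast; rw [h2]; ring
      rwa [ZMod.intCast_zmod_eq_zero_iff_dvd] at this
    omega

lemma sum_sq_eq_four_pow (m : ℕ) : ∀ a b c : ℤ, a^2+b^2+c^2 = 4^m →
    a = 0 ∨ a = 2^m ∨ a = -2^m := by
  induction m with
  | zero =>
    intro a b c h
    simp only [pow_zero] at h ⊢
    have hb : b^2 ≥ 0 := sq_nonneg b
    have hc : c^2 ≥ 0 := sq_nonneg c
    have hl : -1 ≤ a := by nlinarith
    have hr : a ≤ 1 := by nlinarith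
    interval_cases a <;> simp
  | succ m ih =>
    intro a b c h
    obtain ⟨a', rfl⟩ := even_of_sum_sq a b c m h
    obtain ⟨b', rfl⟩ := even_of_sum_sq b (2*a') c m (by linear_combination h)
    obtain ⟨c', rfl⟩ := even_of_sum_sq c (2*a') (2*b') m (by linear_combination h)
    have h' : a'^2 + b'^2 + c'^2 = 4^m := by
      have : (4:ℤ) * (a'^2+b'^2+c'^2) = 4 * 4^m := by rw [← pow_succ']; ring_nf; ring_nf at h; linarith
      linarith
    rcases ih a' b' c' h' with h0 | h1 | h2
    · left; omega
    · right; left; rw [h1]; ring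
    · right; right; rw [h2]; ring


/-- If a point of `ℝ³` with dyadic-rational coordinates lies on the sphere of radius
`2 ^ j` centered at the origin, then each coordinate is one of `-2 ^ j, 0, 2 ^ j`. -/
theorem dyadic_points_on_sphere_radius_pow_two (j : ℕ) (y₁ y₂ y₃ : ℝ)
    (h₁ : IsDyadic y₁) (h₂ : IsDyadic y₂) (h₃ : IsDyadic y₃)
    (hs : y₁ ^ 2 + y₂ ^ 2 + y₃ ^ 2 = ((2 : ℝ) ^ j) ^ 2) :
    y₁ ∈ ({-(2 : ℝ) ^ j, 0, (2 : ℝ) ^ j} : Set ℝ) ∧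
    y₂ ∈ ({-(2 : ℝ) ^ j, 0, (2 : ℝ) ^ j} : Set ℝ) ∧
    y₃ ∈ ({-(2 : ℝ) ^ j, 0, (2 : ℝ) ^ j} : Set ℝ) := by
  obtain ⟨z₁, k₁, rfl⟩ := h₁
  obtain ⟨z₂, k₂, rfl⟩ := h₂
  obtain ⟨z₃, k₃, rfl⟩ := h₃
  set K := k₁ + k₂ + k₃ with hK
  -- integer numerators at common denominator 2^K
  have e₁ : ((z₁ * 2 ^ (k₂ + k₃) : ℤ) : ℝ) = (z₁ : ℝ) / 2 ^ k₁ * 2 ^ K := by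
    push_cast
    rw [hK]
    field_simp
    ring
  have e₂ : ((z₂ * 2 ^ (k₁ + k₃) : ℤ) : ℝ) = (z₂ : ℝ) / 2 ^ k₂ * 2 ^ K := by
    push_cast
    rw [hK]
    field_simp
    ring
  have e₃ : ((z₃ * 2 ^ (k₁ + k₂) : ℤ) : ℝ) = (z₃ : ℝ) / 2 ^ k₃ * 2 ^ K := by
    push_cast
    rw [hK]
    field_simp
    ring
  set Z₁ : ℤ := z₁ * 2 ^ (k₂ + k₃)
  set Z₂ : ℤ := z₂ * 2 ^ (k₁ + k₃)
  set Z₃ : ℤ := z₃ * 2 ^ (k₁ + k₂)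
  have hZ : Z₁ ^ 2 + Z₂ ^ 2 + Z₃ ^ 2 = 4 ^ (j + K) := by
    have hreal : ((Z₁ ^ 2 + Z₂ ^ 2 + Z₃ ^ 2 : ℤ) : ℝ) = ((4 ^ (j + K) : ℤ) : ℝ) := by
      push_cast
      rw [e₁, e₂, e₃]
      have : ((4:ℝ)) ^ (j + K) = (((2:ℝ)^j) * 2^K)^2 := by
        rw [show (4:ℝ) = 2^2 by norm_num, ← pow_mul, mul_pow, ← pow_mul, ← pow_mul]
        ring_nf
      rw [this]
      nlinarith [hs, sq_nonneg ((2:ℝ)^K)]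
    exact_mod_cast hreal
  have h2K : (0:ℝ) < 2 ^ K := by positivity
  have key : ∀ (Z : ℤ) (y : ℝ), ((Z : ℝ) = y * 2 ^ K) →
      (Z = 0 ∨ Z = 2^(j+K) ∨ Z = -2^(j+K)) →
      y ∈ ({-(2 : ℝ) ^ j, 0, (2 : ℝ) ^ j} : Set ℝ) := by
    intro Z y hZy hcases
    have hy : y = (Z : ℝ) / 2 ^ K := (eq_div_iff (ne_of_gt h2K)).mpr hZy.symm
    have hne := ne_of_gt h2K
    rcases hcases with h0 | hp | hm
    · right; left
      rw [h0] at hy; simpa using hy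
    · right; right
      show y = (2:ℝ) ^ j
      rw [hp] at hy; push_cast at hy
      rw [hy, pow_add, mul_div_assoc, div_self hne, mul_one]
    · left
      show y = -(2:ℝ) ^ j
      rw [hm] at hy; push_cast at hy
      rw [hy, pow_add, neg_div, mul_div_assoc, div_self hne, mul_one]
  refine ⟨key Z₁ _ e₁ (sum_sq_eq_four_pow (j+K) Z₁ Z₂ Z₃ hZ) , key Z₂ _ e₂ ?_, key Z₃ _ e₃ ?_⟩
  · have := sum_sq_eq_four_pow (j+K) Z₂ Z₁ Z₃ (by linear_combination hZ)
    exact this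
  · have := sum_sq_eq_four_pow (j+K) Z₃ Z₁ Z₂ (by linear_combination hZ)
    exact this
end

section
/- Let d ≥ 2 and let x ∈ ℝ^d with ∑_i x_i² = 1 and x_d = min_i (−|x_i|) (i.e., x_d ≤ 0 and |x_d| = max_i |x_i|). Then the Euclidean norm of τ(x) = (x₁/(1−x_d), …, x_{d-1}/(1−x_d)) satisfies ‖τ(x)‖₂ ≤ √((√d − 1)/(√d + 1)) < 1. -/
open Finset

/-- The inverse stereographic projection `σ : ℝ^(d-1) → ℝ^d` with pole `(0,…,0,1)`:
`σ(x) = (2x₁/(1+S²), …, 2x_{d-1}/(1+S²), (−1+S²)/(1+S²))` where `S² = ∑ⱼ xⱼ²`. -/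
noncomputable def sigma' {d : ℕ} (x : Fin (d - 1) → ℝ) : Fin d → ℝ := fun k =>
  if h : (k : ℕ) < d - 1 then
    2 * x ⟨k, h⟩ / (1 + ∑ j, x j ^ 2)
  else
    (-1 + ∑ j, x j ^ 2) / (1 + ∑ j, x j ^ 2)

/-- The stereographic projection `τ : ℝ^d → ℝ^(d-1)` from the pole `(0,…,0,1)`:
`τ(x) = (x₁/(1−x_d), …, x_{d-1}/(1−x_d))`. -/
noncomputable def tau' {d : ℕ} (x : Fin d → ℝ) : Fin (d - 1) → ℝ := fun i =>
  x ⟨(i : ℕ), by have := i.isLt; omega⟩ / (1 - x ⟨d - 1, by have := i.isLt; omega⟩)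

/-- The projection pole `p = (0,…,0,1) ∈ ℝ^d`. -/
def pole (d : ℕ) : Fin d → ℝ := fun k => if (k : ℕ) = d - 1 then 1 else 0

/-- The Euclidean norm `‖x‖₂` of a vector `x ∈ ℝ^n`. -/
noncomputable def norm2 {n : ℕ} (x : Fin n → ℝ) : ℝ := Real.sqrt (∑ i, x i ^ 2)
/-- If `x ∈ S^(d-1)` satisfies `x_d = min_i (−|x_i|)` (i.e. `x_d ≤ −|x_i|` for all
`i`), then `‖τ(x)‖₂ ≤ √((√d − 1)/(√d + 1)) < 1`. -/
theorem tau_norm_bound {d : ℕ} (hd : 2 ≤ d) (x : Fin d → ℝ)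
    (hx : (∑ i, x i ^ 2) = 1)
    (hmin : ∀ i, x ⟨d - 1, by omega⟩ ≤ -|x i|) :
    norm2 (tau' x) ≤ Real.sqrt ((Real.sqrt d - 1) / (Real.sqrt d + 1)) ∧
    Real.sqrt ((Real.sqrt d - 1) / (Real.sqrt d + 1)) < 1 := by

  obtain ⟨n, rfl⟩ : ∃ n, d = n + 1 := ⟨d - 1, by omega⟩
  have hn : 1 ≤ n := by omega
  set t := x (Fin.last n) with hT
  have hlast : ∀ (h : n + 1 - 1 < n + 1), x ⟨n + 1 - 1, h⟩ = t := fun h => rfl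
  have hmin' : ∀ i, t ≤ -|x i| := by
    intro i; have := hmin i; rwa [hlast] at this
  have ht0 : t ≤ 0 := le_trans (hmin' (Fin.last n)) (neg_nonpos.mpr (abs_nonneg _))
  have h1t : (0:ℝ) < 1 - t := by linarith
  -- split the sum
  have hsplit : (∑ i : Fin n, x i.castSucc ^ 2) + t ^ 2 = 1 := by
    rw [← hx, Fin.sum_univ_castSucc]
  -- each |x i| ≤ -t so x i ^ 2 ≤ t ^ 2
  have hsq : ∀ i : Fin (n+1), x i ^ 2 ≤ t ^ 2 := by
    intro i
    have h1 := hmin' i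
    have h2 : |x i| ≤ -t := by linarith
    nlinarith [abs_nonneg (x i), sq_abs (x i)]
  have htd : 1 ≤ (n + 1 : ℝ) * t ^ 2 := by
    calc (1:ℝ) = ∑ i : Fin (n+1), x i ^ 2 := hx.symm
    _ ≤ ∑ _i : Fin (n+1), t ^ 2 := Finset.sum_le_sum (fun i _ => hsq i)
    _ = (n + 1 : ℝ) * t ^ 2 := by
        rw [Finset.sum_const, Finset.card_univ, Fintype.card_fin, nsmul_eq_mul]
        push_cast; ring
  set s := Real.sqrt (n + 1) with hS
  have hs2 : s ^ 2 = (n + 1 : ℝ) := Real.sq_sqrt (by positivity)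
  have hn1 : (1:ℝ) ≤ (n:ℝ) + 1 := by
    have : (1:ℝ) ≤ (n:ℝ) := by exact_mod_cast hn
    linarith
  have hs1 : 1 ≤ s := by
    nlinarith [hs2, Real.sqrt_nonneg ((n:ℝ)+1)]
  have hts : t * s ≤ -1 := by
    have h1 : (t * s) ^ 2 = ((n:ℝ) + 1) * t ^ 2 := by rw [mul_pow, hs2]; ring
    have h2 : t * s ≤ 0 := mul_nonpos_of_nonpos_of_nonneg ht0 (by linarith)
    nlinarith [h1, htd, h2]
  -- compute the squared norm of tau'
  have htau : ∀ i : Fin n, tau' x i = x i.castSucc / (1 - t) := by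
    intro i; rfl
  have hsum : (∑ i, tau' x i ^ 2) = (1 + t) / (1 - t) := by
    have : (∑ i, tau' x i ^ 2) = (∑ i : Fin n, x i.castSucc ^ 2) / (1 - t) ^ 2 := by
      rw [Finset.sum_div]
      exact Finset.sum_congr rfl (fun i _ => by rw [htau, div_pow])
    rw [this]
    have hnum : (∑ i : Fin n, x i.castSucc ^ 2) = 1 - t ^ 2 := by linarith
    rw [hnum]
    field_simp
    ring
  have hkey : (1 + t) / (1 - t) ≤ (s - 1) / (s + 1) := by
    rw [div_le_div_iff₀ h1t (by linarith)]
    nlinarith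
  have hcast : Real.sqrt ((n:ℝ) + 1) = s := rfl
  have hineq1 : norm2 (tau' x) ≤ Real.sqrt ((s - 1) / (s + 1)) := by
    rw [norm2, hsum]
    exact Real.sqrt_le_sqrt hkey
  have hineq2 : Real.sqrt ((s - 1) / (s + 1)) < 1 := by
    have hlt : (s - 1) / (s + 1) < 1 := by
      rw [div_lt_one (by linarith)]; linarith
    have h := Real.sqrt_lt_sqrt
      (div_nonneg (by linarith) (by linarith : (0:ℝ) ≤ s + 1)) hlt
    rwa [Real.sqrt_one] at h
  have hc : ((n + 1 : ℕ) : ℝ) = (n : ℝ) + 1 := by push_cast; ring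
  rw [hc, hcast]
  exact ⟨hineq1, hineq2⟩
end

section
/- Let d ≥ 2, let ε ∈ (0, 1/8], and let x ∈ ℝ^d with ∑_i x_i² = 1. Then there exists a point z ∈ ℚ^d with ∑_i z_i² = 1, ‖z − x‖_∞ ≤ ε, and such that all coordinates of z can be written as integers over a common denominator m with 1 ≤ m ≤ 10(d−1)/ε². -/
open Finset

set_option maxHeartbeats 1000000 in
lemma aux_main {d : ℕ} (hd : 2 ≤ d) (ε : ℝ) (hε : 0 < ε) (hε8 : ε ≤ 1 / 8)
    (x : Fin d → ℝ) (hx : (∑ i, x i ^ 2) = 1) (i₀ : Fin d) (hneg : x i₀ ≤ 0) :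
    ∃ (m : ℕ) (n : Fin d → ℤ),
      1 ≤ m ∧ (m : ℝ) ≤ 10 * ((d : ℝ) - 1) / ε ^ 2 ∧
      (∑ k, ((n k : ℝ) / (m : ℝ)) ^ 2) = 1 ∧
      (∀ k, |(n k : ℝ) / (m : ℝ) - x k| ≤ ε) := by
  have hc1 : (0:ℝ) < 1 - x i₀ := by linarith
  have hsd : (1:ℝ) ≤ (d:ℝ) - 1 := by
    have : (2:ℝ) ≤ (d:ℝ) := by exact_mod_cast hd
    linarith
  set s : ℝ := Real.sqrt ((d:ℝ) - 1) with hsdef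
  have hs1 : 1 ≤ s := by
    have h := Real.sqrt_le_sqrt (show (1:ℝ) ≤ (d:ℝ) - 1 by linarith)
    rwa [Real.sqrt_one] at h
  have hssq : s ^ 2 = (d:ℝ) - 1 := Real.sq_sqrt (by linarith)
  set Q : ℕ := ⌈2 * s / ε⌉₊ with hQdef
  have hQ0 : (0:ℝ) < 2 * s / ε := by positivity
  have hQ1 : 2 * s / ε ≤ (Q:ℝ) := Nat.le_ceil _
  have hQ2 : (Q:ℝ) ≤ 2 * s / ε + 1 := by
    have := Nat.ceil_lt_add_one hQ0.le
    linarith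
  have hQpos : (0:ℝ) < (Q:ℝ) := lt_of_lt_of_le hQ0 hQ1
  set qr : ℝ := (Q:ℝ) with hqr
  set y : Fin d → ℝ := fun j => if j = i₀ then 0 else x j / (1 - x i₀) with hy
  set a : Fin d → ℤ := fun j => if 0 ≤ y j then ⌊qr * y j⌋ else ⌈qr * y j⌉ with ha
  have ha0 : a i₀ = 0 := by simp [ha, hy]
  have ha1 : ∀ j, |(a j : ℝ)| ≤ qr * |y j| := by
    intro j
    by_cases h : 0 ≤ y j
    · have ht : (0:ℝ) ≤ qr * y j := by positivity
      have h1 : (0:ℤ) ≤ ⌊qr * y j⌋ := Int.floor_nonneg.2 ht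
      have h2 : ((⌊qr * y j⌋ : ℤ):ℝ) ≤ qr * y j := Int.floor_le _
      rw [ha]
      simp only [h, if_true]
      rw [abs_of_nonneg (by exact_mod_cast h1), abs_of_nonneg h]
      exact h2
    · push_neg at h
      have ht : qr * y j ≤ 0 := by
        apply mul_nonpos_of_nonneg_of_nonpos hQpos.le h.le
      have h1 : ⌈qr * y j⌉ ≤ 0 := Int.ceil_le.2 (by exact_mod_cast ht)
      have h2 : qr * y j ≤ ((⌈qr * y j⌉ : ℤ):ℝ) := Int.le_ceil _
      rw [ha]
      simp only [not_le.2 h, if_false]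
      rw [abs_of_nonpos (by exact_mod_cast h1), abs_of_nonpos h.le]
      linarith
  have ha2 : ∀ j, |(a j : ℝ) - qr * y j| ≤ 1 := by
    intro j
    by_cases h : 0 ≤ y j
    · rw [ha]; simp only [h, if_true]
      have h2 : ((⌊qr * y j⌋ : ℤ):ℝ) ≤ qr * y j := Int.floor_le _
      have h3 : qr * y j - 1 ≤ ((⌊qr * y j⌋ : ℤ):ℝ) := by
        have := Int.sub_one_lt_floor (qr * y j); linarith
      rw [abs_le]; constructor <;> linarith
    · rw [ha]; simp only [h, if_false]
      have h2 : qr * y j ≤ ((⌈qr * y j⌉ : ℤ):ℝ) := Int.le_ceil _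
      have h3 : ((⌈qr * y j⌉ : ℤ):ℝ) < qr * y j + 1 := Int.ceil_lt_add_one _
      rw [abs_le]; constructor <;> linarith
  have hy0 : y i₀ = 0 := by simp [hy]
  clear_value s Q qr y a
  set W : ℝ := ∑ j, (y j) ^ 2 with hWdef
  have hW0 : 0 ≤ W := by positivity
  have hWE : ∑ j ∈ univ.erase i₀, y j ^ 2 = W := by
    rw [hWdef, ← Finset.sum_erase_add univ _ (Finset.mem_univ i₀), hy0]
    ring
  have hW : W = (1 + x i₀) / (1 - x i₀) := by
    have hxE : ∑ j ∈ univ.erase i₀, x j ^ 2 = 1 - x i₀ ^ 2 := by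
      have h : ∑ j ∈ univ.erase i₀, x j ^ 2 + x i₀ ^ 2 = 1 := by
        rw [Finset.sum_erase_add univ _ (Finset.mem_univ i₀)]
        exact hx
      linarith
    have h2 : ∑ j ∈ univ.erase i₀, y j ^ 2 = ∑ j ∈ univ.erase i₀, x j ^ 2 / (1 - x i₀) ^ 2 := by
      apply Finset.sum_congr rfl
      intro j hj
      simp only [hy]
      rw [if_neg (Finset.ne_of_mem_erase hj), div_pow]
    rw [← hWE, h2, ← Finset.sum_div, hxE, div_eq_div_iff (by positivity) hc1.ne']
    ring
  have hWle : W ≤ 1 := by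
    rw [hW, div_le_one hc1]
    linarith
  set u : Fin d → ℝ := fun j => (a j : ℝ) / qr with hu
  have hu0 : u i₀ = 0 := by simp [hu, ha0]
  set U : ℝ := ∑ j, (u j) ^ 2 with hUdef
  have hU0 : 0 ≤ U := by positivity
  clear_value W u U
  have hUE : ∑ j ∈ univ.erase i₀, u j ^ 2 = U := by
    rw [hUdef, ← Finset.sum_erase_add univ _ (Finset.mem_univ i₀), hu0]
    ring
  have hUle : U ≤ 1 := by
    have h1 : ∀ j, u j ^ 2 ≤ y j ^ 2 := by
      intro j
      have h := ha1 j
      have h2 : |u j| ≤ |y j| := by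
        rw [hu]
        rw [abs_div, abs_of_nonneg hQpos.le, div_le_iff₀ hQpos]
        calc |(a j : ℝ)| ≤ qr * |y j| := h
          _ = |y j| * qr := by ring
      calc u j ^ 2 = |u j| ^ 2 := (sq_abs _).symm
        _ ≤ |y j| ^ 2 := by apply pow_le_pow_left₀ (abs_nonneg _) h2
        _ = y j ^ 2 := sq_abs _
    calc U = ∑ j, u j ^ 2 := hUdef
      _ ≤ ∑ j, y j ^ 2 := Finset.sum_le_sum fun j _ => h1 j
      _ = W := hWdef.symm
      _ ≤ 1 := hWle
  -- the integer data
  set m : ℕ := Q ^ 2 + ∑ j, (a j).natAbs ^ 2 with hm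
  set n : Fin d → ℤ := fun k => if k = i₀ then (∑ j, (a j) ^ 2) - (Q:ℤ) ^ 2 else 2 * a k * (Q:ℤ) with hn
  clear_value m n
  have hmR : (m : ℝ) = qr ^ 2 * (1 + U) := by
    rw [hm]
    push_cast
    rw [← hqr, hUdef, mul_add, mul_one, Finset.mul_sum]
    congr 1
    apply Finset.sum_congr rfl
    intro j _
    rw [Nat.cast_natAbs, Int.cast_abs, sq_abs, hu]
    field_simp
  have hU1 : (1:ℝ) + U ≠ 0 := ne_of_gt (by linarith)
  have hW1 : (1:ℝ) + W ≠ 0 := ne_of_gt (by linarith)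
  have hmpos : (0:ℝ) < (m:ℝ) := by
    rw [hmR]
    exact mul_pos (pow_pos hQpos 2) (by linarith)
  have hQge1 : 1 ≤ Q := by
    by_contra h
    push_neg at h
    have hq0 : Q = 0 := by omega
    rw [hqr, hq0] at hQpos
    simp at hQpos
  have hm1 : 1 ≤ m := by
    rw [hm]
    have h1 : 1 ≤ Q ^ 2 := Nat.one_le_pow _ _ (by omega)
    omega
  have hm2 : (m : ℝ) ≤ 10 * ((d:ℝ) - 1) / ε ^ 2 := by
    have h1 : (m:ℝ) ≤ 2 * qr ^ 2 := by rw [hmR]; nlinarith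
    have h2 : qr * ε ≤ 2 * s + ε := by
      have := mul_le_mul_of_nonneg_right hQ2 hε.le
      calc qr * ε ≤ (2 * s / ε + 1) * ε := this
        _ = 2 * s + ε := by field_simp
    have h3 : qr * ε ≤ 17 / 8 * s := by
      have : ε ≤ s / 8 := by linarith
      linarith
    have h4 : (qr * ε) ^ 2 ≤ 289 / 64 * s ^ 2 := by
      have h7 := mul_self_le_mul_self (mul_nonneg hQpos.le hε.le) h3
      calc (qr * ε) ^ 2 = (qr * ε) * (qr * ε) := pow_two _
        _ ≤ (17 / 8 * s) * (17 / 8 * s) := h7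
        _ = 289 / 64 * s ^ 2 := by ring
    have h5 : (m:ℝ) * ε ^ 2 ≤ 2 * (qr * ε) ^ 2 := by
      have h6 := mul_le_mul_of_nonneg_right h1 (sq_nonneg ε)
      calc (m:ℝ) * ε ^ 2 ≤ 2 * qr ^ 2 * ε ^ 2 := h6
        _ = 2 * (qr * ε) ^ 2 := by ring
    rw [← hssq, le_div_iff₀ (pow_pos hε 2)]
    linarith [sq_nonneg s]
  -- coordinate formulas
  have hzE : ∀ j, j ≠ i₀ → (n j : ℝ) / m = 2 * u j / (1 + U) := by
    intro j hj
    simp only [hn, if_neg hj]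
    push_cast
    rw [← hqr, hmR, hu]
    field_simp
  have hAU : (∑ j, ((a j):ℝ) ^ 2) = qr ^ 2 * U := by
    rw [hUdef, Finset.mul_sum]
    apply Finset.sum_congr rfl
    intro j _
    rw [hu]
    field_simp
  have hzI : (n i₀ : ℝ) / m = (-1 + U) / (1 + U) := by
    simp only [hn, if_pos rfl]
    push_cast
    rw [← hqr, hmR, hAU]
    field_simp
    ring
  have hxj : ∀ j, j ≠ i₀ → x j = 2 * y j / (1 + W) := by
    intro j hj
    rw [hW]
    simp only [hy]
    rw [if_neg hj]
    field_simp
    ring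
  have hxi : x i₀ = (-1 + W) / (1 + W) := by
    rw [hW]
    field_simp
    ring
  -- sphere identity
  have hsphere : (∑ k, ((n k:ℝ)/(m:ℝ))^2) = 1 := by
    rw [← Finset.sum_erase_add univ _ (Finset.mem_univ i₀)]
    have h1 : ∑ j ∈ univ.erase i₀, ((n j:ℝ)/(m:ℝ))^2
        = ∑ j ∈ univ.erase i₀, (u j)^2 * (4/(1+U)^2) := by
      apply Finset.sum_congr rfl
      intro j hj
      rw [hzE j (Finset.ne_of_mem_erase hj)]
      field_simp
      ring
    rw [h1, ← Finset.sum_mul, hUE, hzI]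
    field_simp
    ring
  -- chordal identity
  set D : ℝ := ∑ j ∈ univ.erase i₀, (u j - y j)^2 with hDdef
  have hD0 : 0 ≤ D := by
    rw [hDdef]
    exact Finset.sum_nonneg fun j _ => sq_nonneg _
  clear_value D
  have hchord : (∑ k, ((n k:ℝ)/(m:ℝ) - x k)^2) = 4 * D / ((1+U)*(1+W)) := by
    rw [← Finset.sum_erase_add univ _ (Finset.mem_univ i₀)]
    have h1 : ∑ j ∈ univ.erase i₀, ((n j:ℝ)/(m:ℝ) - x j)^2
        = ∑ j ∈ univ.erase i₀, ((u j - y j)^2 * (4/((1+U)*(1+W)))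
            + ((1+W)*(u j)^2 - (1+U)*(y j)^2) * (4*(W-U)/(((1+U)*(1+W))^2))) := by
      apply Finset.sum_congr rfl
      intro j hj
      rw [hzE j (Finset.ne_of_mem_erase hj), hxj j (Finset.ne_of_mem_erase hj)]
      field_simp
      ring
    rw [h1, Finset.sum_add_distrib, ← Finset.sum_mul, ← Finset.sum_mul,
      Finset.sum_sub_distrib, ← Finset.mul_sum, ← Finset.mul_sum, hUE, hWE,
      hzI, hxi]
    rw [← hDdef]
    field_simp
    ring
  -- error bounds
  have hDle : D ≤ ((d:ℝ) - 1) / qr ^ 2 := by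
    have hcard : (((univ : Finset (Fin d)).erase i₀).card : ℝ) = (d:ℝ) - 1 := by
      rw [Finset.card_erase_of_mem (Finset.mem_univ i₀)]
      simp only [Finset.card_univ, Fintype.card_fin]
      rw [Nat.cast_sub (by omega : 1 ≤ d)]
      simp
    have h1 : ∀ j ∈ univ.erase i₀, (u j - y j)^2 ≤ 1 / qr ^ 2 := by
      intro j hj
      have h := ha2 j
      have h2 : |u j - y j| ≤ 1 / qr := by
        rw [hu]
        simp only
        rw [show (a j:ℝ)/qr - y j = ((a j:ℝ) - qr * y j)/qr by field_simp, abs_div,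
          abs_of_nonneg hQpos.le, div_le_div_iff₀ hQpos hQpos]
        nlinarith
      calc (u j - y j)^2 = |u j - y j|^2 := (sq_abs _).symm
        _ ≤ (1/qr)^2 := pow_le_pow_left₀ (abs_nonneg _) h2 2
        _ = 1/qr^2 := by rw [div_pow, one_pow]
    calc D = ∑ j ∈ univ.erase i₀, (u j - y j)^2 := hDdef
      _ ≤ (univ.erase i₀).card • (1/qr^2) := Finset.sum_le_card_nsmul _ _ _ h1
      _ = (((univ : Finset (Fin d)).erase i₀).card : ℝ) * (1/qr^2) := by rw [nsmul_eq_mul]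
      _ = ((d:ℝ)-1)/qr^2 := by rw [hcard]; ring
  have hqr2 : 4 * (((d:ℝ) - 1) / qr ^ 2) ≤ ε ^ 2 := by
    have h2s : 2 * s ≤ qr * ε := by
      rw [div_le_iff₀ hε] at hQ1
      linarith
    have h8 : (2 * s) * (2 * s) ≤ (qr * ε) * (qr * ε) :=
      mul_self_le_mul_self (by linarith) h2s
    have h9 : 4 * s ^ 2 ≤ ε ^ 2 * qr ^ 2 := by nlinarith [h8]
    rw [← hssq, show 4 * (s ^ 2 / qr ^ 2) = (4 * s ^ 2) / qr ^ 2 by ring,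
      div_le_iff₀ (pow_pos hQpos 2)]
    linarith
  have hfar : ∀ k, ((n k:ℝ)/(m:ℝ) - x k)^2 ≤ ε^2 := by
    intro k
    have h1 : ((n k:ℝ)/(m:ℝ) - x k)^2 ≤ ∑ k', ((n k':ℝ)/(m:ℝ) - x k')^2 :=
      Finset.single_le_sum (f := fun k' => ((n k':ℝ)/(m:ℝ) - x k')^2)
        (fun i _ => sq_nonneg _) (Finset.mem_univ k)
    rw [hchord] at h1
    have h2 : 4 * D / ((1+U)*(1+W)) ≤ 4 * D := by
      apply div_le_self (by linarith)
      nlinarith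
    have h3 : 4 * D ≤ 4 * (((d:ℝ)-1)/qr^2) := by linarith
    linarith
  refine ⟨m, n, hm1, hm2, hsphere, ?_⟩
  intro k
  have h := hfar k
  rw [abs_le]
  exact abs_le_of_sq_le_sq' h hε.le

/-- Denominator-size theorem for the snapping algorithm: every point of the unit
sphere `S^(d-1)` admits, for each `ε ∈ (0, 1/8]`, a rational point `z` exactly on
the sphere with `‖z − x‖_∞ ≤ ε` whose coordinates have a common denominator
`m ≤ 10(d−1)/ε²`. -/
theorem snapping_denominator_size {d : ℕ} (hd : 2 ≤ d) (ε : ℝ) (hε : 0 < ε)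
    (hε8 : ε ≤ 1 / 8) (x : Fin d → ℝ) (hx : (∑ i, x i ^ 2) = 1) :
    ∃ (m : ℕ) (n : Fin d → ℤ),
      1 ≤ m ∧ (m : ℝ) ≤ 10 * ((d : ℝ) - 1) / ε ^ 2 ∧
      (∑ k, ((n k : ℝ) / (m : ℝ)) ^ 2) = 1 ∧
      (∀ k, |(n k : ℝ) / (m : ℝ) - x k| ≤ ε) := by
  have hd1 : d - 1 < d := by omega
  set i₀ : Fin d := ⟨d - 1, hd1⟩ with hi0
  by_cases hneg : x i₀ ≤ 0
  · exact aux_main hd ε hε hε8 x hx i₀ hneg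
  · push_neg at hneg
    set x' : Fin d → ℝ := Function.update x i₀ (-(x i₀)) with hx'
    have hsq : ∀ k, x' k ^ 2 = x k ^ 2 := by
      intro k
      by_cases hk : k = i₀
      · subst hk
        simp [hx']
      · simp [hx', Function.update_of_ne hk]
    have hx1 : (∑ i, x' i ^ 2) = 1 := by
      rw [Finset.sum_congr rfl fun k _ => hsq k]
      exact hx
    have hneg' : x' i₀ ≤ 0 := by
      simp only [hx', Function.update_self]
      linarith
    obtain ⟨m, n', hm1, hm2, hs, hc⟩ := aux_main hd ε hε hε8 x' hx1 i₀ hneg'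
    refine ⟨m, fun k => if k = i₀ then -(n' i₀) else n' k, hm1, hm2, ?_, ?_⟩
    · rw [← hs]
      apply Finset.sum_congr rfl
      intro k _
      by_cases hk : k = i₀
      · subst hk
        simp only [if_pos rfl]
        push_cast
        ring
      · simp only [if_neg hk]
    · intro k
      by_cases hk : k = i₀
      · have h := hc i₀
        have hxv : x' i₀ = -x i₀ := by simp [hx']
        rw [hxv, abs_le] at h
        simp only [if_pos hk, hk]
        push_cast
        rw [neg_div, abs_le]
        constructor <;> linarith [h.1, h.2]
      · have h := hc k
        simp only [if_neg hk]
        rwa [hx', Function.update_of_ne hk] at h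
end
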